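/- arXiv:2501.10584 — 4 statements merged into one kernel-verified Lean document; each statement's English description precedes it below -/
import Mathlib

section
/- Let 0 < ρ ≤ 1 and, for ī, j̄ ∈ {1,2,3}^ℕ, define F¹_{ī,j̄}(b) = b·Π_b(ī) + ((1+b)/2)·Π_b(j̄) − 1, where Π_b is the natural projection of Φ_b = {((1+b)/2)x − 1, −b·x, ((1+b)/2)x + 1}. If (i₁, j₁) ≠ (1,3), then F¹_{ī,j̄} is not identically zero on (−ρ, ρ). -/
open Set Filter

/-- The maps of the conjugated Okamoto IFS `Φ_b`, with digit `0 ↦ φ₁`, `1 ↦ φ₂`, `2 ↦ φ₃`. -/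
noncomputable def phiMap (b : ℝ) : Fin 3 → ℝ → ℝ
  | 0 => fun x => (1 + b) / 2 * x - 1
  | 1 => fun x => -b * x
  | 2 => fun x => (1 + b) / 2 * x + 1

/-- `phiOrbit b ī n = φ_{i₁} ∘ ⋯ ∘ φ_{i_n} (0)`. -/
noncomputable def phiOrbit (b : ℝ) : (ℕ → Fin 3) → ℕ → ℝ
  | _, 0 => 0
  | i, n + 1 => phiMap b (i 0) (phiOrbit b (fun k => i (k + 1)) n)

/-!
At `b = 0` every projection lies in `[-2, 2]`, with `Π_0(j̄) = 2` only for `j̄ = 333…`; so unless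
`j̄ = 333…` the function is nonzero at `b = 0`. For `j̄ = 333…` one has `Π_b(j̄) = 2/(1-b)`,
hence `F¹(b) = b (Π_b(ī) + 2/(1-b))`, and `i₁ ≠ 1` keeps `Π_b(ī)` off the lower endpoint
`-2/(1-b)` of the attractor, so `F¹(b) > 0` for `0 < b < 1`.
-/

theorem continuous_phiMap (b : ℝ) (d : Fin 3) : Continuous (phiMap b d) := by
  fin_cases d <;> simp only [phiMap] <;> fun_prop

section Bounds

variable {b : ℝ} (hb₀ : -1 ≤ b) (hb₁ : b < 1)
include hb₀ hb₁

theorem abs_phiMap_le (d : Fin 3) {x : ℝ} (hx : |x| ≤ 2 / (1 - b)) :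
    |phiMap b d x| ≤ 2 / (1 - b) := by
  have hM : 2 / (1 - b) * (1 - b) = 2 := div_mul_cancel₀ _ (by linarith)
  rw [abs_le] at hx ⊢
  fin_cases d <;> simp only [phiMap] <;> constructor <;> nlinarith

theorem abs_phiOrbit_le (n : ℕ) (i : ℕ → Fin 3) : |phiOrbit b i n| ≤ 2 / (1 - b) := by
  induction n generalizing i with
  | zero => simp only [phiOrbit, abs_zero]; exact div_nonneg two_pos.le (by linarith)
  | succ n ih => exact abs_phiMap_le hb₀ hb₁ (i 0) (ih _)

end Bounds

section Projection

variable {b : ℝ} {P : (ℕ → Fin 3) → ℝ} (hP : ∀ i, Tendsto (phiOrbit b i) atTop (nhds (P i)))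
include hP

theorem phiProj_eq_phiMap (i : ℕ → Fin 3) : P i = phiMap b (i 0) (P fun k => i (k + 1)) :=
  tendsto_nhds_unique ((hP i).comp (tendsto_add_atTop_nat 1))
    (((continuous_phiMap b (i 0)).tendsto _).comp (hP _))

theorem abs_phiProj_le (hb₀ : -1 ≤ b) (hb₁ : b < 1) (i : ℕ → Fin 3) :
    |P i| ≤ 2 / (1 - b) :=
  le_of_tendsto (hP i).abs (Eventually.of_forall fun n => abs_phiOrbit_le hb₀ hb₁ n i)

theorem phiProj_of_forall_eq_two (hb₁ : b < 1) {j : ℕ → Fin 3} (hj : ∀ n, j n = 2) :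
    P j = 2 / (1 - b) := by
  have hfix := phiProj_eq_phiMap hP j
  rw [show (fun k => j (k + 1)) = j from funext fun k => by rw [hj, hj], hj 0] at hfix
  simp only [phiMap] at hfix
  rw [eq_div_iff (by linarith)]
  linarith

theorem neg_two_div_lt_phiProj (hb₀ : 0 ≤ b) (hb₁ : b < 1) {i : ℕ → Fin 3} (hi : i 0 ≠ 0) :
    -(2 / (1 - b)) < P i := by
  have hM : 2 / (1 - b) * (1 - b) = 2 := div_mul_cancel₀ _ (by linarith)
  obtain ⟨hx₁, hx₂⟩ := abs_le.mp (abs_phiProj_le hP (by linarith) hb₁ fun k => i (k + 1))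
  rw [phiProj_eq_phiMap hP i]
  generalize i 0 = d at hi
  fin_cases d
  · exact absurd rfl hi
  all_goals simp only [phiMap]; nlinarith [mul_le_mul_of_nonneg_left hx₂ hb₀]

end Projection

theorem phiMap_zero_lt_two {d : Fin 3} {x : ℝ} (hx : x ≤ 2) (hd : d = 2 → x < 2) :
    phiMap 0 d x < 2 := by
  fin_cases d
  · simp only [phiMap]; linarith
  · simp only [phiMap]; norm_num
  · have := hd rfl
    simp only [phiMap]; linarith

theorem phiProj_zero_lt_two {P : (ℕ → Fin 3) → ℝ}
    (hP : ∀ i, Tendsto (phiOrbit 0 i) atTop (nhds (P i))) (n : ℕ) {j : ℕ → Fin 3}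
    (hj : j n ≠ 2) : P j < 2 := by
  have hx (j : ℕ → Fin 3) : P j ≤ 2 := by
    simpa using (abs_le.mp (abs_phiProj_le hP (by norm_num) (by norm_num) j)).2
  induction n generalizing j with
  | zero => exact (phiProj_eq_phiMap hP j).symm ▸ phiMap_zero_lt_two (hx _) fun h => absurd h hj
  | succ n ih => exact (phiProj_eq_phiMap hP j).symm ▸ phiMap_zero_lt_two (hx _) fun _ => ih hj

theorem F1_not_identically_zero (ρ : ℝ) (hρ : 0 < ρ) (hρ1 : ρ ≤ 1)
    (proj : ℝ → (ℕ → Fin 3) → ℝ)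
    (hproj : ∀ b ∈ Ioo (-ρ) ρ, ∀ i : ℕ → Fin 3,
      Tendsto (phiOrbit b i) atTop (nhds (proj b i)))
    (i j : ℕ → Fin 3) (hij : (i 0, j 0) ≠ ((0 : Fin 3), (2 : Fin 3))) :
    ∃ b ∈ Ioo (-ρ) ρ,
      b * proj b i + (1 + b) / 2 * proj b j - 1 ≠ 0 := by
  by_cases hj : ∀ n, j n = 2
  · have hb : ρ / 2 ∈ Ioo (-ρ) ρ := ⟨by linarith, by linarith⟩
    have hb₁ : ρ / 2 < 1 := by linarith
    have hM : 2 / (1 - ρ / 2) * (1 - ρ / 2) = 2 := div_mul_cancel₀ _ (by linarith)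
    have hPi := neg_two_div_lt_phiProj (hproj _ hb) (by linarith) hb₁
      (i := i) fun hi => hij (by rw [hi, hj 0])
    refine ⟨ρ / 2, hb, ne_of_gt ?_⟩
    rw [phiProj_of_forall_eq_two (hproj _ hb) hb₁ hj]
    nlinarith
  · push Not at hj
    obtain ⟨n, hn⟩ := hj
    have hb : (0 : ℝ) ∈ Ioo (-ρ) ρ := ⟨by linarith, hρ⟩
    have hPj := phiProj_zero_lt_two (hproj 0 hb) n hn
    exact ⟨0, hb, by norm_num; linarith⟩
end

section
/- Let b ∈ (0,1), s defined by (2b+1)·(1/3)^{s−1} = 1, and probabilities p₁ = p₃ = ((b+1)/2)·(1/3)^{s−1}, p₂ = b·(1/3)^{s−1} with ratios r₁ = r₃ = (b+1)/2, r₂ = b. For q > 1 let τ(q) be the unique real number with 2·p₁^q·r₁^{−τ(q)} + p₂^q·r₂^{−τ(q)} = 1. Then τ(q) > q − 1 for every q > 1. -/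
/-! Write `c = (1/3)^(s-1)`, so that `(2b+1) c = 1` and `c < 1`. Both ratios lie in `(0,1)`, so
the left side of the defining equation is increasing in `τ`. At `τ = q - 1` the term of ratio `r`
collapses to `(r c)^q r^(1-q) = r c^q`, and the sum becomes `(2b+1) c^q = c^(q-1) < 1`.
Hence `τ ≤ q - 1` would force `1 ≤ c^(q-1) < 1`. -/

open Set Real

lemma mul_rpow_mul_rpow_one_sub {r c : ℝ} (hr : 0 < r) (hc : 0 ≤ c) (q : ℝ) :
    (r * c) ^ q * r ^ (1 - q) = r * c ^ q := by
  rw [mul_rpow hr.le hc, mul_right_comm, ← rpow_add hr, add_sub_cancel, rpow_one]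

lemma mul_rpow_eq_rpow_sub_one {a c : ℝ} (hac : a * c = 1) (q : ℝ) :
    a * c ^ q = c ^ (q - 1) := by
  have hc : c ≠ 0 := right_ne_zero_of_mul_eq_one hac
  rw [rpow_sub_one hc, eq_div_iff hc, mul_right_comm, hac, one_mul]

theorem tau_gt_q_sub_one (b : ℝ) (hb : b ∈ Ioo (0:ℝ) 1)
    (s : ℝ) (hs : (2 * b + 1) * ((1:ℝ)/3) ^ (s - 1) = 1)
    (p₁ p₂ r₁ r₂ : ℝ)
    (hp₁ : p₁ = (b + 1) / 2 * ((1:ℝ)/3) ^ (s - 1))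
    (hp₂ : p₂ = b * ((1:ℝ)/3) ^ (s - 1))
    (hr₁ : r₁ = (b + 1) / 2) (hr₂ : r₂ = b)
    (q τ : ℝ) (hq : 1 < q)
    (hτ : 2 * p₁ ^ q * r₁ ^ (-τ) + p₂ ^ q * r₂ ^ (-τ) = 1) :
    τ > q - 1 := by
  obtain ⟨hb0, hb1⟩ := hb
  rw [hp₁, hp₂, hr₁, hr₂] at hτ
  set c : ℝ := ((1:ℝ)/3) ^ (s - 1)
  have hc0 : 0 < c := by positivity
  have hc1 : c < 1 := by nlinarith
  by_contra! hτq
  have hle : 1 ≤ c ^ (q - 1) := calc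
    1 = 2 * ((b + 1) / 2 * c) ^ q * ((b + 1) / 2) ^ (-τ) + (b * c) ^ q * b ^ (-τ) := hτ.symm
    _ ≤ 2 * ((b + 1) / 2 * c) ^ q * ((b + 1) / 2) ^ (1 - q) + (b * c) ^ q * b ^ (1 - q) := by
      gcongr 2 * _ * ?_ + _ * ?_ <;>
        exact rpow_le_rpow_of_exponent_ge (by linarith) (by linarith) (by linarith)
    _ = (2 * b + 1) * c ^ q := by
      rw [mul_assoc 2, mul_rpow_mul_rpow_one_sub (by linarith) hc0.le,
        mul_rpow_mul_rpow_one_sub hb0 hc0.le]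
      ring
    _ = c ^ (q - 1) := mul_rpow_eq_rpow_sub_one hs q
  exact (rpow_lt_one hc0.le hc1 (by linarith)).not_ge hle
end

section
/- Let a ∈ (1/2,1), p = (2a−1)/(4a−1). Then the ratio [−p·log p − (1−p)·log((1−p)/2)] / [−p·log(2a−1) − (1−p)·log a] is strictly greater than 1. -/
/-!
The weights `p, (1-p)/2, (1-p)/2` are the ratios `2a-1, a, a` divided by their sum `4a-1`.
Hence the entropy equals the Lyapunov exponent plus `log (4a-1)`. Since `4a-1 > 1` and the
Lyapunov exponent is positive (all ratios lie in `(0,1)`), the quotient exceeds `1`.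
-/

open Set Real

theorem neg_mul_log_div_sub_mul_log_div {x y c : ℝ} (p q : ℝ) (hx : x ≠ 0) (hy : y ≠ 0)
    (hc : c ≠ 0) :
    -p * log (x / c) - q * log (y / c) = -p * log x - q * log y + (p + q) * log c := by
  rw [log_div hx hc, log_div hy hc]
  ring

theorem neg_mul_log_sub_mul_log_pos {p x y : ℝ} (hp0 : 0 < p) (hp1 : p ≤ 1)
    (hx0 : 0 < x) (hx1 : x < 1) (hy0 : 0 ≤ y) (hy1 : y ≤ 1) :
    0 < -p * log x - (1 - p) * log y := by
  have hlogx : log x < 0 := log_neg hx0 hx1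
  have hlogy : log y ≤ 0 := log_nonpos hy0 hy1
  nlinarith [mul_nonneg (sub_nonneg.mpr hp1) (neg_nonneg.mpr hlogy)]

theorem entropy_lyapunov_ratio_gt_one (a : ℝ) (ha : a ∈ Ioo (1/2 : ℝ) 1)
    (p : ℝ) (hp : p = (2 * a - 1) / (4 * a - 1)) :
    1 < (-p * Real.log p - (1 - p) * Real.log ((1 - p) / 2)) /
        (-p * Real.log (2 * a - 1) - (1 - p) * Real.log a) := by
  obtain ⟨ha1, ha2⟩ := ha
  have hsum : 1 < 4 * a - 1 := by linarith
  have hhalf : (1 - p) / 2 = a / (4 * a - 1) := by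
    have hsum0 : 4 * a - 1 ≠ 0 := by linarith
    rw [hp, one_sub_div hsum0, div_div, div_eq_div_iff (mul_ne_zero hsum0 two_ne_zero) hsum0]
    ring
  have hlyap : 0 < -p * log (2 * a - 1) - (1 - p) * log a := by
    refine neg_mul_log_sub_mul_log_pos ?_ ?_ (by linarith) (by linarith) (by linarith) ha2.le
    · rw [hp]; exact div_pos (by linarith) (by linarith)
    · rw [hp, div_le_one (by linarith)]; linarith
  have hentropy : -p * log p - (1 - p) * log ((1 - p) / 2)
      = (-p * log (2 * a - 1) - (1 - p) * log a) + log (4 * a - 1) := by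
    rw [hhalf, show log p = log ((2 * a - 1) / (4 * a - 1)) by rw [hp],
      neg_mul_log_div_sub_mul_log_div _ _ (by linarith) (by linarith) (by linarith)]
    ring
  rw [hentropy, one_lt_div hlyap]
  linarith [log_pos hsum]
end

section
/- Let E ⊆ ℝ be compact, let L ⊆ ℝ be bounded, and suppose there is a sequence of similarities T_k(x) = (x − x_k)/r_k with 0 < c₁ ≤ |r_k| ≤ c₂ < ∞ for all k such that T_k(L) ∩ B(0,1) converges to E in the Hausdorff metric. Then there exists a similarity T : ℝ → ℝ with T(E) ⊆ closure(L); in particular dim_H E ≤ dim_H closure(L). -/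
/-!
Since `|r_k|` is bounded and the sets `T_k(L) ∩ B(0,1)` are eventually nonempty, the
translations `x_k` stay bounded too, so along a subsequence `r_k → ρ` and `x_k → t`, with
`|ρ| ≥ c₁ > 0`. Every `e ∈ E` is a limit of points `y_k ∈ T_k(L)`, so `r_k y_k + x_k ∈ L`
converges to `ρ e + t`, which therefore lies in `closure L`. The similarity `z ↦ ρ z + t` is
antilipschitz, so it cannot lower Hausdorff dimension.
-/

open Set Filter Metric Topology

namespace Metric

variable {α : Type*} [PseudoEMetricSpace α]

theorem exists_seq_tendsto_of_tendsto_hausdorffEDist {A : ℕ → Set α} {E : Set α}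
    (hA : Tendsto (fun k => hausdorffEDist (A k) E) atTop (𝓝 0)) {e : α} (he : e ∈ E) :
    ∃ y : ℕ → α, (∀ᶠ k in atTop, y k ∈ A k) ∧ Tendsto y atTop (𝓝 e) := by
  -- the slack `k⁻¹` makes the chosen points converge to `e`
  have hchoice : ∀ k : ℕ, ∃ y, hausdorffEDist (A k) E ≠ ⊤ →
      y ∈ A k ∧ edist e y < hausdorffEDist (A k) E + (k : ENNReal)⁻¹ := by
    intro k
    by_cases hk : hausdorffEDist (A k) E = ⊤
    · exact ⟨e, fun h => (h hk).elim⟩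
    · have hlt := ENNReal.lt_add_right hk (ENNReal.inv_ne_zero.2 (ENNReal.natCast_ne_top k))
      obtain ⟨y, hy, hey⟩ :=
        exists_edist_lt_of_hausdorffEDist_lt he (hausdorffEDist_comm.trans_lt hlt)
      exact ⟨y, fun _ => ⟨hy, hey⟩⟩
  choose y hy using hchoice
  have hfin : ∀ᶠ k in atTop, hausdorffEDist (A k) E ≠ ⊤ :=
    (hA.eventually_lt_const ENNReal.zero_lt_top).mono fun _ => ne_of_lt
  have hbound :
      Tendsto (fun k : ℕ => hausdorffEDist (A k) E + (k : ENNReal)⁻¹) atTop (𝓝 0) := by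
    simpa using hA.add ENNReal.tendsto_inv_nat_nhds_zero
  refine ⟨y, hfin.mono fun k hk => (hy k hk).1, tendsto_iff_edist_tendsto_0.2 ?_⟩
  refine tendsto_of_tendsto_of_tendsto_of_le_of_le' tendsto_const_nhds hbound
    (Eventually.of_forall fun _ => zero_le) (hfin.mono fun k hk => ?_)
  exact (edist_comm _ _).le.trans (hy k hk).2.le

end Metric

theorem image_mul_add_subset_closure_of_tendsto_hausdorffEDist {R : Type*} [NormedRing R]
    {A : ℕ → Set R} {E L : Set R} {r x : ℕ → R} {ρ t : R}
    (hmaps : ∀ k, MapsTo (fun y => r k * y + x k) (A k) L)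
    (hA : Tendsto (fun k => hausdorffEDist (A k) E) atTop (𝓝 0))
    (hr : Tendsto r atTop (𝓝 ρ)) (hx : Tendsto x atTop (𝓝 t)) :
    (fun z => ρ * z + t) '' E ⊆ closure L := by
  rintro _ ⟨e, he, rfl⟩
  obtain ⟨y, hyA, hye⟩ := exists_seq_tendsto_of_tendsto_hausdorffEDist hA he
  exact mem_closure_of_tendsto ((hr.mul hye).add hx) (hyA.mono fun k hk => hmaps k hk)

theorem antilipschitzWith_mul_add {R : Type*} [NonUnitalNormedRing R] [NormMulClass R] {a : R}
    (ha : a ≠ 0) (b : R) : AntilipschitzWith ‖a‖₊⁻¹ (fun z => a * z + b) := by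
  have h := (isometry_add_right b).antilipschitz.comp (antilipschitzWith_mul_left ha)
  rwa [mul_one] at h

theorem mapsTo_mul_add_image_sub_div {K : Type*} [Field K] {a : K} (ha : a ≠ 0) (b : K)
    (L : Set K) : MapsTo (fun y => a * y + b) ((fun z => (z - b) / a) '' L) L := by
  rintro _ ⟨z, hz, rfl⟩
  show a * ((z - b) / a) + b ∈ L
  rwa [mul_div_cancel₀ _ ha, sub_add_cancel]

theorem abs_le_of_mem_image_sub_div_inter_closedBall {L : Set ℝ} {M a b y : ℝ}
    (hL : L ⊆ closedBall 0 M) (ha : a ≠ 0)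
    (hy : y ∈ (fun z => (z - b) / a) '' L ∩ closedBall 0 1) : |b| ≤ M + |a| := by
  have hw : |a * y + b| ≤ M := by
    simpa using hL (mapsTo_mul_add_image_sub_div ha b L hy.1)
  have hy1 : |y| ≤ 1 := by simpa using hy.2
  calc |b| = |(a * y + b) - a * y| := by ring_nf
    _ ≤ |a * y + b| + |a| * |y| := by rw [← abs_mul]; exact abs_sub _ _
    _ ≤ M + |a| * 1 := by gcongr
    _ = M + |a| := by rw [mul_one]

theorem weak_tangent_bounded_scaling_general
    (E L : Set ℝ) (hEne : E.Nonempty) (hL : Bornology.IsBounded L)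
    (x r : ℕ → ℝ) (c₁ c₂ : ℝ) (hc₁ : 0 < c₁)
    (hr : ∀ k, c₁ ≤ |r k| ∧ |r k| ≤ c₂)
    (hconv : Tendsto
      (fun k => EMetric.hausdorffEdist
        ((fun z => (z - x k) / r k) '' L ∩ closedBall (0:ℝ) 1) E)
      atTop (nhds 0)) :
    (∃ ρ t : ℝ, ρ ≠ 0 ∧ (fun z => ρ * z + t) '' E ⊆ closure L) ∧
      dimH E ≤ dimH (closure L) := by
  have hr0 : ∀ k, r k ≠ 0 := fun k h => by simpa [h] using hc₁.trans_le (hr k).1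
  obtain ⟨M, hM⟩ := hL.subset_closedBall 0
  obtain ⟨y, hyA, -⟩ := exists_seq_tendsto_of_tendsto_hausdorffEDist hconv hEne.some_mem
  have hbdd :
      ∃ᶠ k in atTop, (r k, x k) ∈ closedBall (0 : ℝ) c₂ ×ˢ closedBall (0 : ℝ) (M + c₂) := by
    refine (hyA.mono fun k hk => ?_).frequently
    have hx := abs_le_of_mem_image_sub_div_inter_closedBall hM (hr0 k) hk
    simp only [mem_prod, mem_closedBall, dist_zero_right, Real.norm_eq_abs]
    exact ⟨(hr k).2, hx.trans (by linarith [(hr k).2])⟩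
  obtain ⟨⟨ρ, t⟩, -, φ, hφ, hlim⟩ :=
    tendsto_subseq_of_frequently_bounded
      (isBounded_closedBall.prod isBounded_closedBall) hbdd
  have hrlim : Tendsto (r ∘ φ) atTop (𝓝 ρ) := (continuous_fst.tendsto _).comp hlim
  have hxlim : Tendsto (x ∘ φ) atTop (𝓝 t) := (continuous_snd.tendsto _).comp hlim
  have hρ : ρ ≠ 0 := by
    have : c₁ ≤ |ρ| := ge_of_tendsto' hrlim.abs fun j => (hr (φ j)).1
    exact abs_pos.1 (hc₁.trans_le this)
  have hsub := image_mul_add_subset_closure_of_tendsto_hausdorffEDist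
    (fun j => (mapsTo_mul_add_image_sub_div (hr0 (φ j)) _ L).mono_left inter_subset_left)
    (hconv.comp hφ.tendsto_atTop) hrlim hxlim
  exact ⟨⟨ρ, t, hρ, hsub⟩,
    ((antilipschitzWith_mul_add hρ t).le_dimH_image E).trans (dimH_mono hsub)⟩

theorem weak_tangent_bounded_scaling
    (E L : Set ℝ) (hE : IsCompact E) (hEne : E.Nonempty) (hL : Bornology.IsBounded L)
    (x r : ℕ → ℝ) (c₁ c₂ : ℝ) (hc₁ : 0 < c₁)
    (hr : ∀ k, c₁ ≤ |r k| ∧ |r k| ≤ c₂)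
    (hconv : Tendsto
      (fun k => EMetric.hausdorffEdist
        ((fun z => (z - x k) / r k) '' L ∩ closedBall (0:ℝ) 1) E)
      atTop (nhds 0)) :
    (∃ ρ t : ℝ, ρ ≠ 0 ∧ (fun z => ρ * z + t) '' E ⊆ closure L) ∧
      dimH E ≤ dimH (closure L) :=
  weak_tangent_bounded_scaling_general E L hEne hL x r c₁ c₂ hc₁ hr hconv
end
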